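/- arXiv:2101.04272 — 7 statements merged into one kernel-verified Lean document; each statement's English description precedes it below -/
import Mathlib

section
/- Fix integers 1 ≤ i ≤ n. At every point x ∈ ℝⁿ the gradients ∇h_{i,0}(x), ∇h_{i,1}(x), …, ∇h_{i,i−1}(x) are linearly independent (so the level sets of the collection h_{i,0}, …, h_{i,i−1} are mutually transverse everywhere). In particular, for each 0 ≤ j ≤ i−1 the functions h_{i,j} − x_{j+1}, h_{i,j+1}, …, h_{i,i−1} do not depend on the variable x_{j+1}, while ∂h_{i,j}/∂x_{j+1} = 1 identically. -/
/-!
Since `h_{i,j} = x_{j+1} - h_{i,j+1}²` and `h_{i,j+1}` involves only `x_{j+2}, …, x_i`, the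
partial derivative `∂h_{i,j}/∂x_k` vanishes for `k ≤ j` and equals `1` for `k = j + 1`. So the
Jacobian of `(h_{i,0}, …, h_{i,i-1})` in the variables `x_1, …, x_i` is unitriangular, hence has
determinant `1`, and its rows (the restricted gradients) are linearly independent.
-/

open scoped ContDiff

noncomputable section

/-- The polynomial `h_i` in the variables `x_1, …, x_i` (0-indexed: it depends on
coordinates `0, …, i-1`): `h_0 = 0`, `h_{i+1}(x) = x 0 - (h_i (x ∘ (·+1)))^2`. -/
def hpoly : ℕ → (ℕ → ℝ) → ℝ
  | 0, _ => 0
  | i + 1, x => x 0 - (hpoly i fun k => x (k + 1)) ^ 2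

/-- Extension of a vector of `ℝⁿ` by zeros to an infinite sequence. -/
def extv {n : ℕ} (x : Fin n → ℝ) : ℕ → ℝ := fun k => if h : k < n then x ⟨k, h⟩ else 0

/-- `h_{i,j}` as a function on `ℝⁿ` (0-indexed: it depends on coordinates `j, …, i-1`;
in the paper's notation `h_{i,j}(x) = h_{i-j}(x_{j+1}, …, x_i)`). -/
def hh (n i j : ℕ) (x : Fin n → ℝ) : ℝ := hpoly (i - j) fun k => extv x (j + k)

/-- The gradient of a function on `ℝⁿ`, via the Fréchet derivative. -/
def grad {n : ℕ} (f : (Fin n → ℝ) → ℝ) (x : Fin n → ℝ) : Fin n → ℝ :=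
  fun k => fderiv ℝ f x (Pi.single k 1)

/-- The `m`-th standard basis vector of `ℝⁿ` (zero if `m ≥ n`). -/
def evec (n m : ℕ) : Fin n → ℝ := fun k => if (k : ℕ) = m then 1 else 0

open Function

theorem linearIndependent_of_apply_eq_zero_of_lt {ι κ R : Type*} [CommRing R] [Fintype ι]
    [LinearOrder ι] (v : ι → κ → R) (e : ι → κ) (h_lt : ∀ j k, k < j → v j (e k) = 0)
    (h_diag : ∀ j, IsUnit (v j (e j))) : LinearIndependent R v := by
  classical
  let A : Matrix ι ι R := Matrix.of fun j k => v j (e k)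
  have hA : A.IsUpperTriangular := fun j k hkj => h_lt j k hkj
  have hA_unit : IsUnit A := by
    rw [Matrix.isUnit_iff_isUnit_det, Matrix.det_of_isUpperTriangular hA]
    exact IsUnit.prod_univ_iff.mpr h_diag
  exact .of_comp (LinearMap.funLeft R R e) (Matrix.linearIndependent_rows_of_isUnit hA_unit)

theorem HasFDerivAt.hasDerivAt_comp_update {𝕜 ι F : Type*} [NontriviallyNormedField 𝕜]
    [Fintype ι] [DecidableEq ι] [NormedAddCommGroup F] [NormedSpace 𝕜 F] {f : (ι → 𝕜) → F}
    {f' : (ι → 𝕜) →L[𝕜] F} {x : ι → 𝕜} (hf : HasFDerivAt f f' x) (k : ι) :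
    HasDerivAt (fun t => f (update x k t)) (f' (Pi.single k 1)) (x k) := by
  rw [← update_eq_self k x] at hf
  exact hf.comp_hasDerivAt (x k) (hasDerivAt_update x k (x k))

theorem Differentiable.hpoly {E : Type*} [NormedAddCommGroup E] [NormedSpace ℝ E]
    {g : ℕ → E → ℝ} (hg : ∀ k, Differentiable ℝ (g k)) (m : ℕ) :
    Differentiable ℝ fun y => hpoly m fun k => g k y := by
  induction m generalizing g with
  | zero => exact differentiable_const 0
  | succ m ih => exact (hg 0).sub ((ih fun k => hg (k + 1)).pow 2)

theorem differentiable_extv (n p : ℕ) : Differentiable ℝ fun x : Fin n → ℝ => extv x p := by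
  by_cases hp : p < n
  · simpa only [extv, hp, dif_pos] using differentiable_apply (⟨p, hp⟩ : Fin n)
  · simpa only [extv, hp, dif_neg, not_false_eq_true] using differentiable_const (0 : ℝ)

theorem differentiable_hh (n i j : ℕ) : Differentiable ℝ (hh n i j) :=
  Differentiable.hpoly (fun k => differentiable_extv n (j + k)) (i - j)

section hh

variable {n i j : ℕ}

theorem hh_update_of_lt {m : ℕ} {c : Fin n} (hc : (c : ℕ) < m) (x : Fin n → ℝ) (t : ℝ) :
    hh n i m (update x c t) = hh n i m x := by
  have hne : ∀ k (hk : m + k < n), (⟨m + k, hk⟩ : Fin n) ≠ c := fun k _ =>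
    Fin.ne_of_val_ne (by simp only; omega)
  simp only [hh, extv]
  congr 1; funext k
  split_ifs with hk
  · exact update_of_ne (hne k hk) t x
  · rfl

theorem hh_eq_sub_sq (hj : j < i) (hjn : j < n) (x : Fin n → ℝ) :
    hh n i j x = x ⟨j, hjn⟩ - hh n i (j + 1) x ^ 2 := by
  obtain ⟨d, hd⟩ : ∃ d, i - j = d + 1 := ⟨i - (j + 1), by omega⟩
  have hd' : i - (j + 1) = d := by omega
  simp only [hh, hd, hd', hpoly, extv, add_zero, dif_pos hjn, add_assoc, add_comm 1]

theorem hh_update_self_sub (hj : j < i) (hjn : j < n) (x : Fin n → ℝ) (t : ℝ) :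
    hh n i j (update x ⟨j, hjn⟩ t) - t = hh n i j x - x ⟨j, hjn⟩ := by
  rw [hh_eq_sub_sq hj hjn, hh_eq_sub_sq hj hjn, hh_update_of_lt (Nat.lt_succ_self j),
    update_self]
  ring

theorem fderiv_hh_single_of_lt {k : Fin n} (hk : (k : ℕ) < j) (x : Fin n → ℝ) :
    fderiv ℝ (hh n i j) x (Pi.single k 1) = 0 := by
  have hconst : (fun t => hh n i j (update x k t)) = fun _ => hh n i j x :=
    funext fun t => hh_update_of_lt hk x t
  have hderiv := (differentiable_hh n i j x).hasFDerivAt.hasDerivAt_comp_update k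
  rw [hconst] at hderiv
  exact hderiv.unique (hasDerivAt_const _ _)

theorem fderiv_hh_single_self (hj : j < i) (hjn : j < n) (x : Fin n → ℝ) :
    fderiv ℝ (hh n i j) x (Pi.single ⟨j, hjn⟩ 1) = 1 := by
  have hline : (fun t => hh n i j (update x ⟨j, hjn⟩ t)) =
      fun t => t + (hh n i j x - x ⟨j, hjn⟩) :=
    funext fun t => by rw [← hh_update_self_sub hj hjn x t]; ring
  have hderiv := (differentiable_hh n i j x).hasFDerivAt.hasDerivAt_comp_update ⟨j, hjn⟩
  rw [hline] at hderiv
  exact hderiv.unique ((hasDerivAt_id _).add_const _)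

theorem linearIndependent_grad_hh (hin : i ≤ n) (x : Fin n → ℝ) :
    LinearIndependent ℝ fun j : Fin i => grad (hh n i j) x :=
  linearIndependent_of_apply_eq_zero_of_lt _ (Fin.castLE hin)
    (fun _ k hkj => fderiv_hh_single_of_lt (k := Fin.castLE hin k) hkj x)
    (fun j => by
      rw [grad, Fin.castLE, fderiv_hh_single_self j.2 (j.2.trans_le hin) x]
      exact isUnit_one)

end hh

theorem stmt_0_general (n i : ℕ) (hin : i ≤ n) :
    (∀ x : Fin n → ℝ,
      LinearIndependent ℝ (fun j : Fin i => grad (hh n i (j : ℕ)) x)) ∧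
    (∀ j : ℕ, ∀ hj : j < i,
      -- `h_{i,j} - x_{j+1}` does not depend on `x_{j+1}`
      (∀ (x : Fin n → ℝ) (t : ℝ),
        hh n i j (Function.update x ⟨j, lt_of_lt_of_le hj hin⟩ t) - t
          = hh n i j x - x ⟨j, lt_of_lt_of_le hj hin⟩) ∧
      -- `h_{i,m}` for `j < m ≤ i-1` does not depend on `x_{j+1}`
      (∀ m : ℕ, j < m → m < i → ∀ (x : Fin n → ℝ) (t : ℝ),
        hh n i m (Function.update x ⟨j, lt_of_lt_of_le hj hin⟩ t) = hh n i m x) ∧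
      -- `∂h_{i,j}/∂x_{j+1} = 1` identically
      (∀ x : Fin n → ℝ,
        fderiv ℝ (hh n i j) x (Pi.single ⟨j, lt_of_lt_of_le hj hin⟩ 1) = 1)) :=
  ⟨linearIndependent_grad_hh hin, fun _ hj =>
    ⟨hh_update_self_sub hj _, fun _ hjm _ => hh_update_of_lt hjm, fderiv_hh_single_self hj _⟩⟩

/-- For `1 ≤ i ≤ n`, at every point `x ∈ ℝⁿ` the gradients
`∇h_{i,0}(x), …, ∇h_{i,i-1}(x)` are linearly independent.  In particular, for each
`0 ≤ j ≤ i-1` the functions `h_{i,j} - x_{j+1}, h_{i,j+1}, …, h_{i,i-1}` do not depend on the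
variable `x_{j+1}`, while `∂h_{i,j}/∂x_{j+1} = 1` identically.
(0-indexed: the paper's variable `x_{j+1}` is coordinate `j`.) -/
theorem stmt_0 (n i : ℕ) (hi1 : 1 ≤ i) (hin : i ≤ n) :
    (∀ x : Fin n → ℝ,
      LinearIndependent ℝ (fun j : Fin i => grad (hh n i (j : ℕ)) x)) ∧
    (∀ j : ℕ, ∀ hj : j < i,
      -- `h_{i,j} - x_{j+1}` does not depend on `x_{j+1}`
      (∀ (x : Fin n → ℝ) (t : ℝ),
        hh n i j (Function.update x ⟨j, lt_of_lt_of_le hj hin⟩ t) - t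
          = hh n i j x - x ⟨j, lt_of_lt_of_le hj hin⟩) ∧
      -- `h_{i,m}` for `j < m ≤ i-1` does not depend on `x_{j+1}`
      (∀ m : ℕ, j < m → m < i → ∀ (x : Fin n → ℝ) (t : ℝ),
        hh n i m (Function.update x ⟨j, lt_of_lt_of_le hj hin⟩ t) = hh n i m x) ∧
      -- `∂h_{i,j}/∂x_{j+1} = 1` identically
      (∀ x : Fin n → ℝ,
        fderiv ℝ (hh n i j) x (Pi.single ⟨j, lt_of_lt_of_le hj hin⟩ 1) = 1)) :=
  stmt_0_general n i hin
end
end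

section
/- Fix integers 1 ≤ i ≤ n and signs δ = (δ_0,…,δ_n) ∈ {±1}^{n+1}. The map Φ_i : ℝⁿ → ℝⁿ given by Φ_i(x) = (h_{i,0}(x), h_{i,1}(x), …, h_{i,i−1}(x), x_{i+1}, …, x_n) is a bijection of ℝⁿ whose inverse is also a polynomial map (so Φ_i is a smooth diffeomorphism of ℝⁿ), and Φ_i maps the quadrant ⁿQ_i^δ := {x ∈ ℝⁿ : δ_k h_{i,k−1}(x) ≤ 0 for k = 1,…,i} onto the set {y ∈ ℝⁿ : δ_k y_k ≤ 0 for k = 1,…,i}. In particular ⁿQ_i^δ is diffeomorphic to ℝ_{≥0}^i × ℝ^{n−i}. -/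
open scoped ContDiff

noncomputable section

lemma extv_lt {n : ℕ} (x : Fin n → ℝ) {k : ℕ} (h : k < n) : extv x k = x ⟨k, h⟩ := by
  simp [extv, h]

lemma hh_of_le {n i j : ℕ} (h : i ≤ j) (x : Fin n → ℝ) : hh n i j x = 0 := by
  unfold hh
  rw [Nat.sub_eq_zero_of_le h]
  rfl

lemma hh_rec {n i j : ℕ} (h : j < i) (x : Fin n → ℝ) :
    hh n i j x = extv x j - (hh n i (j + 1) x) ^ 2 := by
  unfold hh
  have h1 : i - j = (i - (j + 1)) + 1 := by omega
  have h2 : (fun k => extv x (j + (k + 1))) = fun k => extv x (j + 1 + k) := by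
    funext k; congr 1; omega
  rw [h1]
  simp only [hpoly, Nat.add_zero, h2]

lemma hh_contDiff_aux (n i : ℕ) (hin : i ≤ n) :
    ∀ d j, i - j ≤ d → ContDiff ℝ ∞ (hh n i j)
  | 0, j, h => by
      have hij : i ≤ j := by omega
      have : hh n i j = fun _ => 0 := funext (hh_of_le hij)
      rw [this]; exact contDiff_const
  | d + 1, j, h => by
      by_cases hj : j < i
      · have hjn : j < n := lt_of_lt_of_le hj hin
        have : hh n i j = fun x => x ⟨j, hjn⟩ - (hh n i (j + 1) x) ^ 2 := by
          funext x; rw [hh_rec hj, extv_lt x hjn]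
        rw [this]
        exact ((ContinuousLinearMap.proj (R := ℝ) (φ := fun _ : Fin n => ℝ)
          ⟨j, hjn⟩).contDiff).sub
          ((hh_contDiff_aux n i hin d (j + 1) (by omega)).pow 2)
      · have hij : i ≤ j := by omega
        have : hh n i j = fun _ => 0 := funext (hh_of_le hij)
        rw [this]; exact contDiff_const

lemma hh_contDiff (n i j : ℕ) (hin : i ≤ n) : ContDiff ℝ ∞ (hh n i j) :=
  hh_contDiff_aux n i hin (i - j) j le_rfl

/-- The explicit polynomial inverse of `Φ_i`. -/
def psi (n i : ℕ) (hin : i ≤ n) (y : Fin n → ℝ) : Fin n → ℝ :=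
  fun k => if h : (k : ℕ) + 1 < i then y k + (y ⟨(k : ℕ) + 1, lt_of_lt_of_le h hin⟩) ^ 2 else y k

lemma hh_psi_aux (n i : ℕ) (hin : i ≤ n) (y : Fin n → ℝ) :
    ∀ d j, i - j ≤ d → ∀ hj : j < i,
      hh n i j (psi n i hin y) = y ⟨j, lt_of_lt_of_le hj hin⟩
  | 0, j, hd, hj => by omega
  | d + 1, j, hd, hj => by
      have hjn : j < n := lt_of_lt_of_le hj hin
      rw [hh_rec hj, extv_lt _ hjn]
      by_cases h1 : j + 1 < i
      · rw [hh_psi_aux n i hin y d (j + 1) (by omega) h1]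
        simp only [psi, h1, dif_pos]
        ring
      · have : i ≤ j + 1 := by omega
        rw [hh_of_le this]
        simp only [psi, h1, dif_neg, not_false_iff]
        ring

lemma hh_psi (n i j : ℕ) (hin : i ≤ n) (y : Fin n → ℝ) (hj : j < i) :
    hh n i j (psi n i hin y) = y ⟨j, lt_of_lt_of_le hj hin⟩ :=
  hh_psi_aux n i hin y (i - j) j le_rfl hj

/-- For `1 ≤ i ≤ n` and signs `δ ∈ {±1}^{n+1}`, the map
`Φ_i(x) = (h_{i,0}(x), …, h_{i,i-1}(x), x_{i+1}, …, x_n)` is a bijection of `ℝⁿ` with smooth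
(indeed polynomial) inverse, and it maps the quadrant
`ⁿQ_i^δ = {x : δ_k h_{i,k-1}(x) ≤ 0, k = 1, …, i}` onto `{y : δ_k y_k ≤ 0, k = 1, …, i}`.
(0-indexed: the paper's `δ_k h_{i,k-1} ≤ 0`, `k = 1, …, i`, is `δ_{j+1} h_{i,j} ≤ 0`, `j < i`.) -/
theorem stmt_1 (n i : ℕ) (hi1 : 1 ≤ i) (hin : i ≤ n)
    (δ : Fin (n + 1) → ℝ) (hδ : ∀ k, δ k = 1 ∨ δ k = -1)
    (Φ : (Fin n → ℝ) → (Fin n → ℝ))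
    (hΦ : ∀ x k, Φ x k = if (k : ℕ) < i then hh n i (k : ℕ) x else x k) :
    Function.Bijective Φ ∧
    (∃ Ψ : (Fin n → ℝ) → (Fin n → ℝ),
      Function.LeftInverse Ψ Φ ∧ Function.RightInverse Ψ Φ ∧
      ContDiff ℝ ∞ Φ ∧ ContDiff ℝ ∞ Ψ) ∧
    Φ '' {x | ∀ j : ℕ, ∀ hj : j < i,
            δ ⟨j + 1, Nat.succ_lt_succ (lt_of_lt_of_le hj hin)⟩ * hh n i j x ≤ 0}
      = {y | ∀ j : ℕ, ∀ hj : j < i,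
            δ ⟨j + 1, Nat.succ_lt_succ (lt_of_lt_of_le hj hin)⟩ * y ⟨j, lt_of_lt_of_le hj hin⟩ ≤ 0} := by
  set Ψ := psi n i hin with hΨ
  -- Φ evaluated at a coordinate below i
  have hΦlt : ∀ (x : Fin n → ℝ) (j : ℕ) (hj : j < i),
      Φ x ⟨j, lt_of_lt_of_le hj hin⟩ = hh n i j x := by
    intro x j hj
    rw [hΦ]
    simp [hj]
  -- left inverse
  have hleft : Function.LeftInverse Ψ Φ := by
    intro x
    funext k
    simp only [hΨ, psi]
    by_cases h1 : (k : ℕ) + 1 < i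
    · rw [dif_pos h1]
      have hk : (k : ℕ) < i := by omega
      have e1 : Φ x k = hh n i (k : ℕ) x := by rw [hΦ]; simp [hk]
      have e2 : Φ x ⟨(k : ℕ) + 1, lt_of_lt_of_le h1 hin⟩ = hh n i ((k : ℕ) + 1) x :=
        hΦlt x _ h1
      rw [e1, e2, hh_rec hk, extv_lt x k.isLt]
      simp only [Fin.eta]
      ring
    · rw [dif_neg h1, hΦ]
      by_cases hk : (k : ℕ) < i
      · rw [if_pos hk]
        have : i ≤ (k : ℕ) + 1 := by omega
        rw [hh_rec hk, hh_of_le this, extv_lt x k.isLt]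
        simp only [Fin.eta]
        ring
      · rw [if_neg hk]
  -- right inverse
  have hright : Function.RightInverse Ψ Φ := by
    intro y
    funext k
    rw [hΦ]
    by_cases hk : (k : ℕ) < i
    · rw [if_pos hk, hΨ, hh_psi n i (k : ℕ) hin y hk]
    · rw [if_neg hk]
      have h1 : ¬ ((k : ℕ) + 1 < i) := by omega
      simp only [hΨ, psi, dif_neg h1]
  -- smoothness of Φ
  have hΦsmooth : ContDiff ℝ ∞ Φ := by
    rw [contDiff_pi]
    intro k
    by_cases hk : (k : ℕ) < i
    · have : (fun x => Φ x k) = hh n i (k : ℕ) := by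
        funext x; rw [hΦ, if_pos hk]
      rw [this]
      exact hh_contDiff n i (k : ℕ) hin
    · have : (fun x => Φ x k) = fun x => x k := by
        funext x; rw [hΦ, if_neg hk]
      rw [this]
      exact (ContinuousLinearMap.proj (R := ℝ) (φ := fun _ : Fin n => ℝ) k).contDiff
  -- smoothness of Ψ
  have hΨsmooth : ContDiff ℝ ∞ Ψ := by
    rw [contDiff_pi]
    intro k
    simp only [hΨ, psi]
    by_cases h1 : (k : ℕ) + 1 < i
    · simp only [dif_pos h1]
      exact ((ContinuousLinearMap.proj (R := ℝ) (φ := fun _ : Fin n => ℝ) k).contDiff).add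
        (((ContinuousLinearMap.proj (R := ℝ) (φ := fun _ : Fin n => ℝ)
          ⟨(k : ℕ) + 1, lt_of_lt_of_le h1 hin⟩).contDiff).pow 2)
    · simp only [dif_neg h1]
      exact (ContinuousLinearMap.proj (R := ℝ) (φ := fun _ : Fin n => ℝ) k).contDiff
  refine ⟨⟨hleft.injective, hright.surjective⟩, ⟨Ψ, hleft, hright, hΦsmooth, hΨsmooth⟩, ?_⟩
  ext y
  constructor
  · rintro ⟨x, hx, rfl⟩
    intro j hj
    rw [hΦlt x j hj]
    exact hx j hj
  · intro hy
    refine ⟨Ψ y, ?_, hright y⟩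
    intro j hj
    rw [hΨ, hh_psi n i j hin y hj]
    exact hy j hj
end
end

section
/- Fix n ≥ 1, 1 ≤ i ≤ n, and signs δ = (δ_0,…,δ_n) ∈ {±1}^{n+1}. Define s on the half-space {(x_0,x) ∈ ℝ × ℝⁿ : δ_0 x_0 ≥ 0} by s(x_0, x_1, x_2, …, x_n) = (x_0, δ_0δ_1(x_1 + δ_1√(δ_0 x_0)), x_2, …, x_n). Then s maps the set ⁿΓ_i|_δ := {(x_0,x) : x_0 = δ_0 h_i(x)², and δ_k h_{i,k−1}(x) ≤ 0 for k = 1,…,i} bijectively onto the set {(x_0,x) : δ_0 x_0 ≥ 0, x_1 = δ_0δ_1 · h_{i,1}(x)², and δ_{k+1} h_{i,k}(x) ≤ 0 for k = 1,…,i−1}, i.e. onto (δ_0 ℝ_{≥0}) × ⁿ⁻¹Γ_{i−1}|_{δ'} where δ' = (δ_0δ_1, δ_2, …, δ_n) and ⁿ⁻¹Γ_{i−1}|_{δ'} is the analogous restricted signed graph in the coordinates (x_1; x_2,…,x_n) with x_1 as vertical coordinate. -/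
open scoped ContDiff

noncomputable section

/-!
The map `s` only shears the coordinate `x_1` by `δ_1 √(δ_0 x_0)`. Writing `u := h_i(x)`, one has
`h_i = x_1 - h_{i,1}²`, while `h_{i,1}` and all `h_{i,k}` with `k ≥ 1` do not involve `x_1`.
On `ⁿΓ_i|_δ` the equation `δ_0 x_0 = u²` and the sign condition `δ_1 u ≤ 0` give
`δ_1 √(δ_0 x_0) = -u`, so the new coordinate is `δ_0δ_1 (x_1 - u) = δ_0δ_1 h_{i,1}²`.
Conversely `x_1 := h_{i,1}² - δ_1 √(δ_0 x_0)` is a preimage, and `s` is injective because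
it is a translation in `x_1` followed by multiplication by `δ_0δ_1 = ±1`.
-/

section SignedSquareRoot

variable {c c0 c1 t u : ℝ}

lemma mul_abs_eq_neg_of_mul_nonpos (hc : c * c = 1) (hu : c * u ≤ 0) : c * |u| = -u := by
  have habs : |c| = 1 := by
    have : |c| * |c| = 1 := by rw [← abs_mul, hc, abs_one]
    nlinarith [abs_nonneg c]
  have : |u| = -(c * u) := by rw [← abs_of_nonpos hu, abs_mul, habs, one_mul]
  rw [this]
  linear_combination (-u) * hc

lemma mul_sqrt_eq_neg_of_eq_mul_sq (h0 : c0 * c0 = 1) (h1 : c1 * c1 = 1) (ht : t = c0 * u ^ 2)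
    (hu : c1 * u ≤ 0) : c1 * √(c0 * t) = -u := by
  rw [ht, ← mul_assoc, h0, one_mul, Real.sqrt_sq_eq_abs, mul_abs_eq_neg_of_mul_nonpos h1 hu]

lemma eq_mul_sq_of_eq_neg_mul_sqrt (h0 : c0 * c0 = 1) (h1 : c1 * c1 = 1) (ht : 0 ≤ c0 * t)
    (hu : u = -(c1 * √(c0 * t))) : t = c0 * u ^ 2 ∧ c1 * u ≤ 0 := by
  have hsq : √(c0 * t) ^ 2 = c0 * t := Real.sq_sqrt ht
  constructor
  · rw [hu]
    linear_combination (-(c0 * c1 * c1)) * hsq + (-t * c1 * c1) * h0 + (-t) * h1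
  · have : c1 * u = -√(c0 * t) := by rw [hu]; linear_combination (-√(c0 * t)) * h1
    linarith [Real.sqrt_nonneg (c0 * t)]

end SignedSquareRoot

section Graphs

variable {n i : ℕ} (hn : 1 ≤ n)

lemma hh_zero_eq_sub_sq (hi : 1 ≤ i) (x : Fin n → ℝ) :
    hh n i 0 x = x ⟨0, hn⟩ - hh n i 1 x ^ 2 := by
  obtain ⟨m, rfl⟩ : ∃ m, i = m + 1 := ⟨i - 1, by omega⟩
  have hshift : (fun k => extv x (1 + k)) = fun k => extv x (k + 1) := by
    funext k; rw [Nat.add_comm]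
  have hx0 : extv x 0 = x ⟨0, hn⟩ := dif_pos hn
  simp only [hh, Nat.sub_zero, Nat.add_sub_cancel, hpoly, Nat.zero_add, hshift, hx0]

lemma hh_update_zero {j : ℕ} (hj : 1 ≤ j) (x : Fin n → ℝ) (v : ℝ) :
    hh n i j (Function.update x ⟨0, hn⟩ v) = hh n i j x := by
  simp only [hh, extv]
  congr 1
  funext k
  split_ifs
  · exact Function.update_of_ne (Fin.ne_of_val_ne (by dsimp only; omega)) _ _
  · rfl

def shearMap (δ : Fin (n + 1) → ℝ) (z : ℝ × (Fin n → ℝ)) : ℝ × (Fin n → ℝ) :=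
  (z.1, Function.update z.2 ⟨0, hn⟩
    (δ 0 * δ ⟨1, Nat.succ_lt_succ hn⟩ *
      (z.2 ⟨0, hn⟩ + δ ⟨1, Nat.succ_lt_succ hn⟩ * √(δ 0 * z.1))))

variable (hin : i ≤ n) (δ : Fin (n + 1) → ℝ)

/-- `ⁿΓ_i|_δ`. -/
def signedGraph : Set (ℝ × (Fin n → ℝ)) :=
  {z | z.1 = δ 0 * hh n i 0 z.2 ^ 2 ∧
    ∀ j : ℕ, ∀ hj : j < i,
      δ ⟨j + 1, Nat.succ_lt_succ (lt_of_lt_of_le hj hin)⟩ * hh n i j z.2 ≤ 0}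

/-- `(δ_0 ℝ_{≥0}) × ⁿ⁻¹Γ_{i-1}|_{δ'}` with `δ' = (δ_0δ_1, δ_2, …, δ_n)`. -/
def reducedSignedGraph : Set (ℝ × (Fin n → ℝ)) :=
  {z | δ 0 * z.1 ≥ 0 ∧
    z.2 ⟨0, hn⟩ = δ 0 * δ ⟨1, Nat.succ_lt_succ hn⟩ * hh n i 1 z.2 ^ 2 ∧
    ∀ j : ℕ, 1 ≤ j → ∀ hj : j < i,
      δ ⟨j + 1, Nat.succ_lt_succ (lt_of_lt_of_le hj hin)⟩ * hh n i j z.2 ≤ 0}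

variable {δ} (hδ : ∀ k, δ k * δ k = 1)
include hδ

lemma shearMap_injective : Function.Injective (shearMap hn δ) := by
  intro a b hab
  obtain ⟨h1, h2⟩ := Prod.mk.inj hab
  have h0 := congrFun h2 ⟨0, hn⟩
  simp only [Function.update_self, h1] at h0
  set c1 := δ ⟨1, Nat.succ_lt_succ hn⟩
  have hc : δ 0 * c1 ≠ 0 :=
    left_ne_zero_of_mul_eq_one (by linear_combination c1 * c1 * hδ 0 + hδ ⟨1, _⟩ :
      δ 0 * c1 * (δ 0 * c1) = 1)
  refine Prod.ext h1 (funext fun k => ?_)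
  by_cases hk : k = ⟨0, hn⟩
  · subst hk
    linarith [mul_left_cancel₀ hc h0]
  · simpa only [Function.update_of_ne hk] using congrFun h2 k

variable (hi : 1 ≤ i)
include hi

lemma shearMap_mapsTo :
    Set.MapsTo (shearMap hn δ) (signedGraph hin δ) (reducedSignedGraph hn hin δ) := by
  rintro ⟨t, x⟩ ⟨ht, hsign⟩
  dsimp only at ht hsign
  have hu := hh_zero_eq_sub_sq hn hi x
  rw [hu] at ht
  have hroot := mul_sqrt_eq_neg_of_eq_mul_sq (hδ 0) (hδ _) ht (by simpa only [hu] using hsign 0 hi)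
  refine ⟨?_, ?_, fun j hj hji => ?_⟩
  · show δ 0 * t ≥ 0
    rw [ht, ← mul_assoc, hδ 0, one_mul]
    positivity
  · simp only [shearMap, Function.update_self, hh_update_zero hn le_rfl, hroot]
    ring
  · simpa only [shearMap, hh_update_zero hn hj] using hsign j hji

lemma shearMap_surjOn :
    Set.SurjOn (shearMap hn δ) (signedGraph hin δ) (reducedSignedGraph hn hin δ) := by
  rintro ⟨t, x⟩ ⟨ht, hx, hsign⟩
  dsimp only at ht hx hsign
  set c1 := δ ⟨1, Nat.succ_lt_succ hn⟩
  set v := hh n i 1 x ^ 2 - c1 * √(δ 0 * t) with hv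
  have hu : hh n i 0 (Function.update x ⟨0, hn⟩ v) = -(c1 * √(δ 0 * t)) := by
    rw [hh_zero_eq_sub_sq hn hi, Function.update_self, hh_update_zero hn le_rfl, hv]
    ring
  obtain ⟨ht', hsign0⟩ := eq_mul_sq_of_eq_neg_mul_sqrt (hδ 0) (hδ _) ht hu
  refine ⟨(t, Function.update x ⟨0, hn⟩ v), ⟨ht', fun j hji => ?_⟩, ?_⟩
  · rcases Nat.eq_zero_or_pos j with rfl | hj
    · exact hsign0
    · simpa only [hh_update_zero hn hj] using hsign j hj hji
  · have hx0 : δ 0 * c1 * (v + c1 * √(δ 0 * t)) = x ⟨0, hn⟩ := by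
      rw [hx]
      linear_combination (δ 0 * c1) * hv
    show (t, Function.update (Function.update x ⟨0, hn⟩ v) ⟨0, hn⟩
      (δ 0 * c1 * (Function.update x ⟨0, hn⟩ v ⟨0, hn⟩ + c1 * √(δ 0 * t)))) = (t, x)
    rw [Function.update_idem, Function.update_self, hx0, Function.update_eq_self]

lemma shearMap_bijOn :
    Set.BijOn (shearMap hn δ) (signedGraph hin δ) (reducedSignedGraph hn hin δ) :=
  ⟨shearMap_mapsTo hn hin hδ hi, (shearMap_injective hn hδ).injOn, shearMap_surjOn hn hin hδ hi⟩

end Graphs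

/-- Fix `n ≥ 1`, `1 ≤ i ≤ n`, signs `δ ∈ {±1}^{n+1}`, and the map
`s(x_0, x) = (x_0, δ_0δ_1(x_1 + δ_1√(δ_0 x_0)), x_2, …, x_n)` on the half-space `δ_0 x_0 ≥ 0`.
Then `s` maps `ⁿΓ_i|_δ = {x_0 = δ_0 h_i(x)², δ_k h_{i,k-1}(x) ≤ 0 (k = 1, …, i)}` bijectively
onto `{δ_0 x_0 ≥ 0, x_1 = δ_0δ_1 h_{i,1}(x)², δ_{k+1} h_{i,k}(x) ≤ 0 (k = 1, …, i-1)}`,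
i.e. onto `(δ_0 ℝ_{≥0}) × ⁿ⁻¹Γ_{i-1}|_{δ'}` with `δ' = (δ_0δ_1, δ_2, …, δ_n)`.
(0-indexed: the paper's `x_1` is coordinate `0`.) -/
theorem stmt_4 (n i : ℕ) (hn : 1 ≤ n) (hi1 : 1 ≤ i) (hin : i ≤ n)
    (δ : Fin (n + 1) → ℝ) (hδ : ∀ k, δ k = 1 ∨ δ k = -1)
    (s : ℝ × (Fin n → ℝ) → ℝ × (Fin n → ℝ))
    (hs : ∀ z, s z =
      (z.1, Function.update z.2 ⟨0, hn⟩
        (δ 0 * δ ⟨1, Nat.succ_lt_succ hn⟩ *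
          (z.2 ⟨0, hn⟩ + δ ⟨1, Nat.succ_lt_succ hn⟩ * Real.sqrt (δ 0 * z.1))))) :
    s '' {z : ℝ × (Fin n → ℝ) |
        z.1 = δ 0 * (hh n i 0 z.2) ^ 2 ∧
        ∀ j : ℕ, ∀ hj : j < i,
          δ ⟨j + 1, Nat.succ_lt_succ (lt_of_lt_of_le hj hin)⟩ * hh n i j z.2 ≤ 0}
      = {z : ℝ × (Fin n → ℝ) |
          δ 0 * z.1 ≥ 0 ∧
          z.2 ⟨0, hn⟩ = δ 0 * δ ⟨1, Nat.succ_lt_succ hn⟩ * (hh n i 1 z.2) ^ 2 ∧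
          ∀ j : ℕ, 1 ≤ j → ∀ hj : j < i,
            δ ⟨j + 1, Nat.succ_lt_succ (lt_of_lt_of_le hj hin)⟩ * hh n i j z.2 ≤ 0} ∧
    Set.InjOn s {z : ℝ × (Fin n → ℝ) |
        z.1 = δ 0 * (hh n i 0 z.2) ^ 2 ∧
        ∀ j : ℕ, ∀ hj : j < i,
          δ ⟨j + 1, Nat.succ_lt_succ (lt_of_lt_of_le hj hin)⟩ * hh n i j z.2 ≤ 0} := by
  obtain rfl : s = shearMap hn δ := funext hs
  have hbij := shearMap_bijOn hn hin (fun k => mul_self_eq_one_iff.mpr (hδ k)) hi1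
  exact ⟨hbij.image_eq, hbij.injOn⟩
end
end

section
/- Fix n ≥ 1, 1 ≤ i ≤ n, and signs ε = (ε_0,…,ε_n) ∈ {±1}^{n+1}; let σ_ε(x_1,…,x_n) = (ε_1x_1,…,ε_nx_n). Define s on the half-space {(x_0,x) ∈ ℝ × ℝⁿ : ε_0 x_0 ≥ 0} by s(x_0, x_1, x_2, …, x_n) = (x_0, x_1 + ε_0√(ε_0 x_0), x_2, …, x_n). Then s maps the set ⁿΓ_i^ε := {(x_0,x) : x_0 = ε_0 h_i(σ_ε x)², and ε_{k−1}ε_k h_{i,k−1}(σ_ε x) ≤ 0 for k = 1,…,i} bijectively onto the set {(x_0,x) : ε_0 x_0 ≥ 0, x_1 = ε_1 · h_{i−1}(ε_2x_2,…,ε_ix_i)², and ε_k ε_{k+1} h_{i−k}(ε_{k+1}x_{k+1},…,ε_ix_i) ≤ 0 for k = 1,…,i−1}, i.e. onto (ε_0 ℝ_{≥0}) × ⁿ⁻¹Γ_{i−1}^{ε'} where ε' = (ε_1,…,ε_n) and ⁿ⁻¹Γ_{i−1}^{ε'} is the analogous signed restricted graph in the coordinates (x_1; x_2,…,x_n) with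 x_1 as vertical coordinate. -/
open scoped ContDiff

noncomputable section

lemma hh_zero (n i : ℕ) (hn : 1 ≤ n) (x : Fin n → ℝ) :
    hh n (i + 1) 0 x = x ⟨0, hn⟩ - (hh n (i + 1) 1 x) ^ 2 := by
  unfold hh
  simp only [Nat.sub_zero, Nat.add_sub_cancel]
  rw [hpoly]
  congr 1
  · show extv x (0 + 0) = x ⟨0, hn⟩
    unfold extv
    exact dif_pos hn
  congr 2
  funext k
  congr 1
  omega

lemma hh_upd (n i j : ℕ) (hn : 1 ≤ n) (hj : 1 ≤ j) (x : Fin n → ℝ) (a : ℝ) :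
    hh n i j (Function.update x ⟨0, hn⟩ a) = hh n i j x := by
  unfold hh
  congr 1
  funext k
  unfold extv
  split
  · exact Function.update_of_ne (by simp [Fin.ext_iff]; omega) _ _
  · rfl


/-- Fix `n ≥ 1`, `1 ≤ i ≤ n`, signs `ε ∈ {±1}^{n+1}`,
`σ_ε(x_1, …, x_n) = (ε_1x_1, …, ε_nx_n)`, and the map
`s(x_0, x) = (x_0, x_1 + ε_0√(ε_0 x_0), x_2, …, x_n)` on the half-space `ε_0 x_0 ≥ 0`.
Then `s` maps `ⁿΓ_i^ε = {x_0 = ε_0 h_i(σ_ε x)², ε_{k-1}ε_k h_{i,k-1}(σ_ε x) ≤ 0 (k = 1, …, i)}`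
bijectively onto `{ε_0 x_0 ≥ 0, x_1 = ε_1 h_{i,1}(σ_ε x)²,
ε_kε_{k+1} h_{i,k}(σ_ε x) ≤ 0 (k = 1, …, i-1)}`, i.e. onto `(ε_0 ℝ_{≥0}) × ⁿ⁻¹Γ_{i-1}^{ε'}`
with `ε' = (ε_1, …, ε_n)`.  (Note `h_{i,1}(σ_ε x) = h_{i-1}(ε_2x_2, …, ε_ix_i)` and
`h_{i,k}(σ_ε x) = h_{i-k}(ε_{k+1}x_{k+1}, …, ε_ix_i)`; the paper's `x_1` is coordinate `0`.) -/
theorem stmt_5 (n i : ℕ) (hn : 1 ≤ n) (hi1 : 1 ≤ i) (hin : i ≤ n)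
    (ε : Fin (n + 1) → ℝ) (hε : ∀ k, ε k = 1 ∨ ε k = -1)
    (σ : (Fin n → ℝ) → (Fin n → ℝ))
    (hσ : ∀ x j, σ x j = ε ⟨(j : ℕ) + 1, Nat.succ_lt_succ j.isLt⟩ * x j)
    (s : ℝ × (Fin n → ℝ) → ℝ × (Fin n → ℝ))
    (hs : ∀ z, s z =
      (z.1, Function.update z.2 ⟨0, hn⟩
        (z.2 ⟨0, hn⟩ + ε 0 * Real.sqrt (ε 0 * z.1)))) :
    s '' {z : ℝ × (Fin n → ℝ) |
        z.1 = ε 0 * (hh n i 0 (σ z.2)) ^ 2 ∧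
        ∀ j : ℕ, ∀ hj : j < i,
          ε ⟨j, Nat.lt_succ_of_lt (lt_of_lt_of_le hj hin)⟩ *
            ε ⟨j + 1, Nat.succ_lt_succ (lt_of_lt_of_le hj hin)⟩ * hh n i j (σ z.2) ≤ 0}
      = {z : ℝ × (Fin n → ℝ) |
          ε 0 * z.1 ≥ 0 ∧
          z.2 ⟨0, hn⟩ = ε ⟨1, Nat.succ_lt_succ hn⟩ * (hh n i 1 (σ z.2)) ^ 2 ∧
          ∀ j : ℕ, 1 ≤ j → ∀ hj : j < i,
            ε ⟨j, Nat.lt_succ_of_lt (lt_of_lt_of_le hj hin)⟩ *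
              ε ⟨j + 1, Nat.succ_lt_succ (lt_of_lt_of_le hj hin)⟩ * hh n i j (σ z.2) ≤ 0} ∧
    Set.InjOn s {z : ℝ × (Fin n → ℝ) |
        z.1 = ε 0 * (hh n i 0 (σ z.2)) ^ 2 ∧
        ∀ j : ℕ, ∀ hj : j < i,
          ε ⟨j, Nat.lt_succ_of_lt (lt_of_lt_of_le hj hin)⟩ *
            ε ⟨j + 1, Nat.succ_lt_succ (lt_of_lt_of_le hj hin)⟩ * hh n i j (σ z.2) ≤ 0} := by
  obtain ⟨m, rfl⟩ : ∃ m, i = m + 1 := ⟨i - 1, by omega⟩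
  have he0 : ∀ h : 0 < n + 1, ε ⟨0, h⟩ = ε 0 := fun h => by congr 1
  set e1 : Fin (n + 1) := ⟨1, Nat.succ_lt_succ hn⟩ with he1
  have sq1 : ∀ k, ε k * ε k = 1 := fun k => by rcases hε k with h | h <;> rw [h] <;> norm_num
  have abs1 : ∀ k, |ε k| = 1 := fun k => by rcases hε k with h | h <;> rw [h] <;> norm_num
  have hσ0 : ∀ x : Fin n → ℝ, σ x ⟨0, hn⟩ = ε e1 * x ⟨0, hn⟩ := fun x => hσ x ⟨0, hn⟩
  have hσu : ∀ (x : Fin n → ℝ) (a : ℝ),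
      σ (Function.update x ⟨0, hn⟩ a) = Function.update (σ x) ⟨0, hn⟩ (ε e1 * a) := by
    intro x a
    funext j
    by_cases hj : j = ⟨0, hn⟩
    · subst hj
      rw [hσ, Function.update_self, Function.update_self]
    · rw [hσ, Function.update_of_ne hj, Function.update_of_ne hj, hσ]
  have hkey : ∀ x : Fin n → ℝ,
      hh n (m + 1) 0 (σ x) = ε e1 * x ⟨0, hn⟩ - (hh n (m + 1) 1 (σ x)) ^ 2 := by
    intro x
    rw [hh_zero n m hn (σ x), hσ0]
  constructor
  · ext w
    simp only [Set.mem_image, Set.mem_setOf_eq]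
    constructor
    · rintro ⟨z, ⟨hz1, hz2⟩, rfl⟩
      rw [hs z]
      dsimp only
      set h := hh n (m + 1) 0 (σ z.2) with hh0
      set H := hh n (m + 1) 1 (σ z.2) with hH
      have hcond : ε 0 * ε e1 * h ≤ 0 := by
        have t := hz2 0 (Nat.succ_pos m)
        rw [he0] at t
        exact t
      have hnn : ε 0 * z.1 = h ^ 2 := by
        rw [hz1, ← mul_assoc, sq1 0, one_mul]
      have hsqrt : Real.sqrt (ε 0 * z.1) = |h| := by rw [hnn, Real.sqrt_sq_eq_abs]
      have habs : |h| = -(ε 0 * ε e1 * h) := by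
        have t := abs_of_nonpos hcond
        rwa [abs_mul, abs_mul, abs1, abs1, one_mul, one_mul] at t
      refine ⟨?_, ?_, ?_⟩
      · show ε 0 * z.1 ≥ 0
        rw [hnn]; positivity
      · rw [Function.update_self, hσu, hh_upd n (m + 1) 1 hn le_rfl, hsqrt, habs]
        have hk : h = ε e1 * z.2 ⟨0, hn⟩ - hh n (m + 1) 1 (σ z.2) ^ 2 := hkey z.2
        rw [hk]
        rcases hε 0 with ha | ha <;> rcases hε e1 with hb | hb <;> rw [ha, hb] <;> ring
      · intro j hj1 hj2
        rw [hσu, hh_upd n (m + 1) j hn hj1]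
        exact hz2 j hj2
    · rintro ⟨hw1, hw2, hw3⟩
      set c := ε 0 * Real.sqrt (ε 0 * w.1) with hc
      set H := hh n (m + 1) 1 (σ w.2) with hH
      refine ⟨(w.1, Function.update w.2 ⟨0, hn⟩ (w.2 ⟨0, hn⟩ - c)), ⟨?_, ?_⟩, ?_⟩
      all_goals
        have hzval : hh n (m + 1) 0 (σ (Function.update w.2 ⟨0, hn⟩ (w.2 ⟨0, hn⟩ - c))) =
            -(ε 0 * ε e1 * Real.sqrt (ε 0 * w.1)) := by
          rw [hkey, Function.update_self, hσu, hh_upd n (m + 1) 1 hn le_rfl, ← hH, hw2, hc]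
          rcases hε 0 with ha | ha <;> rcases hε e1 with hb | hb <;> rw [ha, hb] <;> ring
      · show w.1 = ε 0 * _ ^ 2
        rw [hzval]
        have hss : Real.sqrt (ε 0 * w.1) ^ 2 = ε 0 * w.1 := Real.sq_sqrt hw1
        have expand : (-(ε 0 * ε e1 * Real.sqrt (ε 0 * w.1))) ^ 2 =
            (ε 0 * ε 0) * ((ε e1 * ε e1) * Real.sqrt (ε 0 * w.1) ^ 2) := by ring
        rw [expand, sq1 0, sq1 e1, one_mul, one_mul, hss, ← mul_assoc, sq1 0, one_mul]
      · intro j hj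
        rcases Nat.eq_zero_or_pos j with rfl | hj1
        · rw [he0]
          show ε 0 * ε e1 * _ ≤ 0
          rw [hzval]
          have hs0 := Real.sqrt_nonneg (ε 0 * w.1)
          have hid : ε 0 * ε e1 * -(ε 0 * ε e1 * Real.sqrt (ε 0 * w.1)) =
              -Real.sqrt (ε 0 * w.1) := by
            linear_combination (-(Real.sqrt (ε 0 * w.1)) * (ε e1 * ε e1)) * sq1 0 +
              (-(Real.sqrt (ε 0 * w.1))) * sq1 e1
          rw [hid]
          simp [Real.sqrt_nonneg]
        · show _ * _ * hh n (m + 1) j (σ (Function.update w.2 ⟨0, hn⟩ _)) ≤ 0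
          rw [hσu, hh_upd n (m + 1) j hn hj1]
          exact hw3 j hj1 hj
      · rw [hs]
        dsimp only
        refine Prod.ext rfl ?_
        rw [Function.update_self, Function.update_idem, sub_add_cancel,
          Function.update_eq_self]
  · intro z hz z' hz' heq
    rw [hs z, hs z', Prod.mk.injEq] at heq
    obtain ⟨h1, h2⟩ := heq
    refine Prod.ext h1 ?_
    funext j
    by_cases hj : j = ⟨0, hn⟩
    · subst hj
      have t := congrFun h2 ⟨0, hn⟩
      rw [Function.update_self, Function.update_self, h1] at t
      linarith
    · have t := congrFun h2 j
      rwa [Function.update_of_ne hj, Function.update_of_ne hj] at t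
end
end

section
/- For all integers 1 ≤ k ≤ i ≤ n, the partial derivative of h_i² satisfies the identity ∂(h_i²)/∂x_k = −(−2)^k · ∏_{j=0}^{k−1} h_{i,j} = −(−2)^k · h_{i,0} h_{i,1} ⋯ h_{i,k−1}, identically on ℝⁿ. -/
open scoped ContDiff

noncomputable section

/-!
Differentiating the recursion `h_{i,j} = x_{j+1} - h_{i,j+1}²` gives
`∂_m (h_{i,j}²) = 2 h_{i,j} (δ_{j,m} - ∂_m (h_{i,j+1}²))` (0-indexed coordinates). Since
`h_{i,m+1}` does not involve `x_m`, the recursion starts at `j = m` with `2 h_{i,m}`, and each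
step down to `j = 0` contributes one more factor `-2 h_{i,j}`.
-/

lemma fderiv_sq_apply {E : Type*} [NormedAddCommGroup E] [NormedSpace ℝ E] {f : E → ℝ}
    {x : E} (hf : DifferentiableAt ℝ f x) (v : E) :
    fderiv ℝ (fun y => f y ^ 2) x v = 2 * f x * fderiv ℝ f x v := by
  simp [fderiv_fun_pow 2 hf, mul_assoc]

namespace HPoly

variable {n i : ℕ}

lemma hh_of_le {j : ℕ} (h : i ≤ j) : hh n i j = 0 := by
  funext x
  simp [hh, Nat.sub_eq_zero_of_le h, hpoly]

lemma hh_of_lt {j : ℕ} (hj : j < i) (hin : i ≤ n) :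
    hh n i j = fun x => x ⟨j, hj.trans_le hin⟩ - hh n i (j + 1) x ^ 2 := by
  funext x
  obtain ⟨d, hd⟩ : ∃ d, i - j = d + 1 := ⟨i - j - 1, by omega⟩
  have hd' : i - (j + 1) = d := by omega
  simp only [hh, hd, hd', hpoly, extv, add_zero, dif_pos (hj.trans_le hin)]
  congr 3
  funext k
  rw [add_assoc, add_comm k 1]

lemma differentiable_hh (hin : i ≤ n) (j : ℕ) : Differentiable ℝ (hh n i j) := by
  rcases le_or_gt i j with h | h
  · rw [hh_of_le h]
    exact differentiable_const 0
  · rw [hh_of_lt h hin]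
    exact (differentiable_apply _).sub ((differentiable_hh hin (j + 1)).pow 2)
termination_by i - j

lemma fderiv_hh_apply {j : ℕ} (hj : j < i) (hin : i ≤ n) (x v : Fin n → ℝ) :
    fderiv ℝ (hh n i j) x v
      = v ⟨j, hj.trans_le hin⟩ - 2 * hh n i (j + 1) x * fderiv ℝ (hh n i (j + 1)) x v := by
  have hdiff := differentiable_hh hin (j + 1) x
  rw [hh_of_lt hj hin, fderiv_fun_sub (differentiableAt_apply _ x) (hdiff.fun_pow 2),
    sub_apply, fderiv_sq_apply hdiff, (hasFDerivAt_apply _ x).fderiv,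
    ContinuousLinearMap.proj_apply]

lemma fderiv_hh_single_of_lt (hin : i ≤ n) (x : Fin n → ℝ) (m : Fin n) {j : ℕ} (hmj : m < j) :
    fderiv ℝ (hh n i j) x (Pi.single m 1) = 0 := by
  rcases le_or_gt i j with h | h
  · simp [hh_of_le h]
  · rw [fderiv_hh_apply h hin, fderiv_hh_single_of_lt hin x m (by omega),
      Pi.single_eq_of_ne (Fin.ne_of_val_ne hmj.ne')]
    ring
termination_by i - j

lemma fderiv_hh_sq_single (hin : i ≤ n) (x : Fin n → ℝ) (m : Fin n) (hmi : m < i) {j : ℕ}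
    (hjm : j ≤ m) :
    fderiv ℝ (fun y => hh n i j y ^ 2) x (Pi.single m 1)
      = -(-2) ^ (m + 1 - j) * ∏ l ∈ Finset.Ico j (m + 1), hh n i l x := by
  rw [fderiv_sq_apply (differentiable_hh hin j x), fderiv_hh_apply (hjm.trans_lt hmi) hin]
  rcases hjm.lt_or_eq with hjm | rfl
  · rw [Pi.single_eq_of_ne (Fin.ne_of_val_ne hjm.ne),
      ← fderiv_sq_apply (differentiable_hh hin _ x), fderiv_hh_sq_single hin x m hmi hjm,
      Finset.prod_eq_prod_Ico_succ_bot (show j < m + 1 by omega),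
      show m + 1 - j = m + 1 - (j + 1) + 1 by omega, pow_succ]
    ring
  · rw [fderiv_hh_single_of_lt hin x m (Nat.lt_succ_self _)]
    simp
termination_by m - j

end HPoly

open HPoly in
/-- For all `1 ≤ k ≤ i ≤ n`, identically on `ℝⁿ`,
`∂(h_i²)/∂x_k = -(-2)^k ∏_{j=0}^{k-1} h_{i,j}`.
(0-indexed: the paper's `x_k` is coordinate `k - 1`.) -/
theorem stmt_12 (n i k : ℕ) (hk1 : 1 ≤ k) (hki : k ≤ i) (hin : i ≤ n)
    (x : Fin n → ℝ) :
    fderiv ℝ (fun y => (hh n i 0 y) ^ 2) x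
        (Pi.single ⟨k - 1, lt_of_lt_of_le (lt_of_lt_of_le (Nat.sub_lt hk1 Nat.one_pos) hki) hin⟩ 1)
      = -(-2 : ℝ) ^ k * ∏ m ∈ Finset.range k, hh n i m x := by
  rw [fderiv_hh_sq_single hin x _ (show k - 1 < i by omega) (Nat.zero_le _),
    ← Finset.range_eq_Ico, Nat.sub_zero, Nat.sub_add_cancel hk1]
end
end

section
/- For every n ≥ 2 the following polynomial identity holds identically on ℝⁿ: h_n(x)² − Σ_{j=1}^{n−1} 2^{−j} x_j · ∂(h_n²)/∂x_j(x) = (−1)^{n−1} x_n · ∏_{j=0}^{n−1} h_{n,j}(x). Equivalently (using ∂(h_n²)/∂x_j = −(−2)^j ∏_{k=0}^{j−1} h_{n,k}): h_n² + Σ_{j=1}^{n−1} (−1)^j x_j ∏_{k=0}^{j−1} h_{n,k} = (−1)^{n−1} x_n² ∏_{k=0}^{n−2} h_{n,k}. -/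
open scoped ContDiff

noncomputable section

/-!
With `A_m = (-1)^m h_{n,m}² ∏_{k<m} h_{n,k}`, the recursion `x_m = h_{n,m} + h_{n,m+1}²`
turns the `m`-th summand of the second identity into `A_{m+1} - A_m`, so that sum telescopes.
The first identity reduces to the second: the chain rule through `h_{n,k} = x_k - h_{n,k+1}²`
gives `∂h_n/∂x_m = (-2)^m ∏_{k=1}^{m} h_{n,k}`.
-/

/-- The paper's `h_{N,k}`, for a sequence `a` in place of `x`. -/
def hpolyTail (N : ℕ) (a : ℕ → ℝ) (k : ℕ) : ℝ := hpoly (N - k) fun j => a (k + j)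

section hpolyTail

variable (N : ℕ) (a : ℕ → ℝ)

theorem hpolyTail_zero : hpolyTail N a 0 = hpoly N a := by
  simp [hpolyTail]

theorem hpolyTail_of_lt {k : ℕ} (hk : k < N) :
    hpolyTail N a k = a k - hpolyTail N a (k + 1) ^ 2 := by
  rw [hpolyTail, hpolyTail, show N - k = N - (k + 1) + 1 by omega, hpoly]
  simp only [add_zero, add_assoc, add_comm 1]

theorem hpolyTail_succ_self : hpolyTail (N + 1) a N = a N := by
  simp [hpolyTail, hpoly]

theorem hpolyTail_shift (k : ℕ) :
    hpolyTail N (fun j => a (j + 1)) k = hpolyTail (N + 1) a (k + 1) := by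
  simp only [hpolyTail, Nat.add_sub_add_right, add_right_comm k]

theorem hpolyTail_sq_add_sum_eq :
    hpolyTail (N + 1) a 0 ^ 2 +
        ∑ m ∈ Finset.range N, (-1 : ℝ) ^ (m + 1) * a m *
          ∏ k ∈ Finset.range (m + 1), hpolyTail (N + 1) a k
      = (-1 : ℝ) ^ N * a N ^ 2 * ∏ k ∈ Finset.range N, hpolyTail (N + 1) a k := by
  set A : ℕ → ℝ := fun m =>
    (-1 : ℝ) ^ m * hpolyTail (N + 1) a m ^ 2 * ∏ k ∈ Finset.range m, hpolyTail (N + 1) a k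
  have hstep : ∀ m ∈ Finset.range N, (-1 : ℝ) ^ (m + 1) * a m *
      ∏ k ∈ Finset.range (m + 1), hpolyTail (N + 1) a k = A (m + 1) - A m := by
    intro m hm
    have ha : a m = hpolyTail (N + 1) a m + hpolyTail (N + 1) a (m + 1) ^ 2 := by
      rw [hpolyTail_of_lt _ _ (by simp at hm; omega)]; ring
    simp only [A, Finset.prod_range_succ, pow_succ, ha]
    ring
  rw [Finset.sum_congr rfl hstep, Finset.sum_range_sub A]
  simp only [A, hpolyTail_succ_self]
  simp

end hpolyTail

/-- The derivative of `hpoly i` at `a` applied to the direction `d`; directions live in any real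
vector space, so that `d k` can be a number or the derivative of the `k`-th argument. -/
def hpolyDeriv {M : Type*} [AddCommGroup M] [Module ℝ M] : ℕ → (ℕ → ℝ) → (ℕ → M) → M
  | 0, _, _ => 0
  | i + 1, a, d =>
    d 0 - (2 * hpoly i fun k => a (k + 1)) • hpolyDeriv i (fun k => a (k + 1)) fun k => d (k + 1)

section hpolyDeriv

variable {M M' : Type*} [AddCommGroup M] [Module ℝ M] [AddCommGroup M'] [Module ℝ M']

theorem hpolyDeriv_zero_right (i : ℕ) (a : ℕ → ℝ) : hpolyDeriv i a (fun _ => (0 : M)) = 0 := by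
  induction i generalizing a with
  | zero => rfl
  | succ i ih =>
    rw [hpolyDeriv]
    simp only [ih, smul_zero, sub_zero]

theorem map_hpolyDeriv (L : M →ₗ[ℝ] M') (i : ℕ) (a : ℕ → ℝ) (d : ℕ → M) :
    L (hpolyDeriv i a d) = hpolyDeriv i a fun k => L (d k) := by
  induction i generalizing a d with
  | zero => exact L.map_zero
  | succ i ih => simp [hpolyDeriv, ih]

theorem hasFDerivAt_hpoly {E : Type*} [NormedAddCommGroup E] [NormedSpace ℝ E] {f : ℕ → E → ℝ}
    {f' : ℕ → E →L[ℝ] ℝ} {x : E} (hf : ∀ k, HasFDerivAt (f k) (f' k) x) (i : ℕ) :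
    HasFDerivAt (fun y => hpoly i fun k => f k y) (hpolyDeriv i (fun k => f k x) f') x := by
  induction i generalizing f f' with
  | zero => exact hasFDerivAt_const 0 x
  | succ i ih =>
    refine ((hf 0).sub ((ih fun k => hf (k + 1)).pow 2)).congr_fderiv ?_
    rw [hpolyDeriv]
    norm_num

theorem hpolyDeriv_single {N m : ℕ} (hm : m < N) (a : ℕ → ℝ) :
    hpolyDeriv N a (Pi.single m 1) =
      (-2 : ℝ) ^ m * ∏ k ∈ Finset.range m, hpolyTail N a (k + 1) := by
  induction m generalizing N a with
  | zero =>
    obtain ⟨i, rfl⟩ : ∃ i, N = i + 1 := ⟨N - 1, by omega⟩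
    have hsucc : (fun k => (Pi.single 0 1 : ℕ → ℝ) (k + 1)) = fun _ => 0 := by
      funext k; simp
    rw [hpolyDeriv, hsucc, hpolyDeriv_zero_right]
    simp
  | succ m ih =>
    obtain ⟨i, rfl⟩ : ∃ i, N = i + 1 := ⟨N - 1, by omega⟩
    have hsucc : (fun k => (Pi.single (m + 1) 1 : ℕ → ℝ) (k + 1)) = Pi.single m 1 := by
      funext k; simp [Pi.single_apply]
    have hhead : (hpoly i fun k => a (k + 1)) = hpolyTail (i + 1) a 1 := by
      rw [← hpolyTail_zero, hpolyTail_shift]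
    rw [hpolyDeriv, hsucc, ih (by omega : m < i), hhead, Finset.prod_range_succ' _ m]
    simp only [hpolyTail_shift, smul_eq_mul, Pi.single_eq_of_ne (Nat.succ_ne_zero m).symm]
    ring

end hpolyDeriv

def extvCLM (n k : ℕ) : (Fin n → ℝ) →L[ℝ] ℝ :=
  if h : k < n then ContinuousLinearMap.proj (⟨k, h⟩ : Fin n) else 0

theorem extvCLM_apply (n k : ℕ) (y : Fin n → ℝ) : extvCLM n k y = extv y k := by
  unfold extvCLM extv
  split <;> simp

theorem extv_evec {n m : ℕ} (hm : m < n) : extv (evec n m) = Pi.single m 1 := by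
  funext k
  unfold extv evec
  by_cases hk : k < n <;> by_cases hkm : k = m <;> simp [hk, hkm] <;> omega

theorem hh_eq_hpolyTail (n k : ℕ) (x : Fin n → ℝ) : hh n n k x = hpolyTail n (extv x) k :=
  rfl

theorem fderiv_hh_sq_evec {n m : ℕ} (hm : m < n) (x : Fin n → ℝ) :
    fderiv ℝ (fun y => hh n n 0 y ^ 2) x (evec n m)
      = -(-2 : ℝ) ^ (m + 1) * ∏ k ∈ Finset.range (m + 1), hh n n k x := by
  have hfun : (fun y => hh n n 0 y ^ 2) = fun y => (hpoly n fun k => extv y k) ^ 2 := by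
    funext y; simp [hh]
  have hderiv := (hasFDerivAt_hpoly (fun k => (extvCLM n k).hasFDerivAt (x := x)) n).pow 2
  simp only [extvCLM_apply] at hderiv
  have happly := map_hpolyDeriv (ContinuousLinearMap.apply ℝ ℝ (evec n m)).toLinearMap n
    (extv x) fun k => extvCLM n k
  simp only [ContinuousLinearMap.coe_coe, ContinuousLinearMap.apply_apply, extvCLM_apply,
    extv_evec hm] at happly
  rw [hfun, hderiv.fderiv, smul_apply, happly, hpolyDeriv_single hm,
    Finset.prod_range_succ' _ m]
  simp only [Nat.add_one_sub_one, pow_one, nsmul_eq_mul, Nat.cast_ofNat, smul_eq_mul,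
    hh_eq_hpolyTail, hpolyTail_zero, neg_mul]
  ring

theorem stmt_15_general (n : ℕ) (x : Fin n → ℝ) :
    ((hh n n 0 x) ^ 2 -
        ∑ m ∈ Finset.range (n - 1),
          (extv x m / 2 ^ (m + 1)) * fderiv ℝ (fun y => (hh n n 0 y) ^ 2) x (evec n m)
      = (-1 : ℝ) ^ (n - 1) * extv x (n - 1) * ∏ m ∈ Finset.range n, hh n n m x) ∧
    ((hh n n 0 x) ^ 2 +
        ∑ m ∈ Finset.range (n - 1),
          (-1 : ℝ) ^ (m + 1) * extv x m * ∏ k ∈ Finset.range (m + 1), hh n n k x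
      = (-1 : ℝ) ^ (n - 1) * (extv x (n - 1)) ^ 2 * ∏ k ∈ Finset.range (n - 1), hh n n k x) := by
  obtain _ | N := n
  · simp [hh, hpoly, extv]
  have hsecond := hpolyTail_sq_add_sum_eq N (extv x)
  simp only [Nat.add_sub_cancel]
  refine ⟨?_, hsecond⟩
  have hterm : ∀ m ∈ Finset.range N,
      extv x m / 2 ^ (m + 1) *
          fderiv ℝ (fun y => hh (N + 1) (N + 1) 0 y ^ 2) x (evec (N + 1) m)
        = -((-1 : ℝ) ^ (m + 1) * extv x m *
            ∏ k ∈ Finset.range (m + 1), hh (N + 1) (N + 1) k x) := by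
    intro m hm
    rw [fderiv_hh_sq_evec (by simp at hm; omega), neg_pow (2 : ℝ)]
    field_simp
  rw [Finset.sum_congr rfl hterm, Finset.sum_neg_distrib, sub_neg_eq_add]
  simp only [hh_eq_hpolyTail]
  rw [hsecond, Finset.prod_range_succ _ N, hpolyTail_succ_self]
  ring

/-- For every `n ≥ 2`, identically on `ℝⁿ`:
`h_n² - Σ_{j=1}^{n-1} 2^{-j} x_j ∂(h_n²)/∂x_j = (-1)^{n-1} x_n ∏_{j=0}^{n-1} h_{n,j}`,
and equivalently
`h_n² + Σ_{j=1}^{n-1} (-1)^j x_j ∏_{k=0}^{j-1} h_{n,k} = (-1)^{n-1} x_n² ∏_{k=0}^{n-2} h_{n,k}`.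
(0-indexed: the paper's `x_j` is coordinate `j - 1`; `extv x m` is the `m`-th coordinate of `x`
and `evec n m` the `m`-th basis vector.) -/
theorem stmt_15 (n : ℕ) (hn : 2 ≤ n) (x : Fin n → ℝ) :
    ((hh n n 0 x) ^ 2 -
        ∑ m ∈ Finset.range (n - 1),
          (extv x m / 2 ^ (m + 1)) * fderiv ℝ (fun y => (hh n n 0 y) ^ 2) x (evec n m)
      = (-1 : ℝ) ^ (n - 1) * extv x (n - 1) * ∏ m ∈ Finset.range n, hh n n m x) ∧
    ((hh n n 0 x) ^ 2 +
        ∑ m ∈ Finset.range (n - 1),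
          (-1 : ℝ) ^ (m + 1) * extv x m * ∏ k ∈ Finset.range (m + 1), hh n n k x
      = (-1 : ℝ) ^ (n - 1) * (extv x (n - 1)) ^ 2 * ∏ k ∈ Finset.range (n - 1), hh n n k x) :=
  stmt_15_general n x
end
end

section
/- Let α be a C^∞ real-valued function defined on an open neighborhood of 0 ∈ ℝ with α(0) > 0. Then there exist open neighborhoods U, V of the origin in ℝ² and a C^∞ diffeomorphism ψ : U → V with ψ(0) = 0 such that ψ(U ∩ {(x_0, x_1) : x_0 = 0}) = V ∩ {(x_0, x_1) : x_0 = 0} and ψ(U ∩ {(x_0, x_1) : x_0 = α(x_1)·x_1²}) = V ∩ {(x_0, x_1) : x_0 = x_1²}. (This is the normalization of a graph with a nondegenerate quadratic tangency to the standard parabola, preserving the line {x_0 = 0}; it is the n = 1 case of the front-normalization theorem.) -/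
open scoped ContDiff

/-!
Divide the first coordinate by `α`: the map `(x₀, x₁) ↦ (x₀ / α x₁, x₁)` is a smooth
diffeomorphism of `ℝ × {α > 0}` with inverse `(x₀, x₁) ↦ (x₀ α x₁, x₁)`. It fixes the line
`x₀ = 0` and sends the graph `x₀ = α(x₁) x₁²` onto the graph `x₀ = x₁²`.
-/

open Set

section Algebra

variable {K β : Type*} [Field K]

def scaleFst (a : β → K) (z : K × β) : K × β := (z.1 * a z.2, z.2)

@[simp]
lemma scaleFst_fst (a : β → K) (z : K × β) : (scaleFst a z).1 = z.1 * a z.2 := rfl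

@[simp]
lemma scaleFst_snd (a : β → K) (z : K × β) : (scaleFst a z).2 = z.2 := rfl

lemma scaleFst_inv_scaleFst {a : β → K} {z : K × β} (h : a z.2 ≠ 0) :
    scaleFst a⁻¹ (scaleFst a z) = z := by
  ext <;> simp [h]

lemma scaleFst_scaleFst_inv {a : β → K} {z : K × β} (h : a z.2 ≠ 0) :
    scaleFst a (scaleFst a⁻¹ z) = z := by
  ext <;> simp [h]

lemma mapsTo_scaleFst (a : β → K) (S : Set β) :
    MapsTo (scaleFst a) (univ ×ˢ S) (univ ×ˢ S) :=
  fun _ hz => ⟨trivial, hz.2⟩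

lemma image_scaleFst_inv_graph {a : β → K} {S : Set β} (ha : ∀ x ∈ S, a x ≠ 0) (g : β → K) :
    scaleFst a⁻¹ '' (univ ×ˢ S ∩ {z | z.1 = a z.2 * g z.2}) = univ ×ˢ S ∩ {z | z.1 = g z.2} := by
  ext z
  constructor
  · rintro ⟨w, ⟨hwS, hw⟩, rfl⟩
    refine ⟨mapsTo_scaleFst _ S hwS, ?_⟩
    simp only [mem_ofPred_eq, scaleFst_fst, scaleFst_snd, Pi.inv_apply] at hw ⊢
    rw [hw, mul_comm, ← mul_assoc, inv_mul_cancel₀ (ha _ hwS.2), one_mul]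
  · rintro ⟨hzS, hz⟩
    refine ⟨scaleFst a z, ⟨mapsTo_scaleFst _ S hzS, ?_⟩, scaleFst_inv_scaleFst (ha _ hzS.2)⟩
    simp only [mem_ofPred_eq, scaleFst_fst, scaleFst_snd] at hz ⊢
    rw [hz, mul_comm]

end Algebra

lemma ContDiffOn.scaleFst {𝕜 E : Type*} [NontriviallyNormedField 𝕜] [NormedAddCommGroup E]
    [NormedSpace 𝕜 E] {a : E → 𝕜} {S : Set E} {n : WithTop ℕ∞} (ha : ContDiffOn 𝕜 n a S) :
    ContDiffOn 𝕜 n (scaleFst a) (univ ×ˢ S) :=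
  (contDiffOn_fst.mul (ha.comp contDiffOn_snd fun _ hz => hz.2)).prodMk contDiffOn_snd

/-- Let `α` be a `C^∞` function on an open neighborhood `W` of `0 ∈ ℝ` with
`α 0 > 0`.  Then there are open neighborhoods `U, V` of the origin in `ℝ²` and a `C^∞`
diffeomorphism `ψ : U → V` with `ψ 0 = 0`, taking `U ∩ {x_0 = 0}` onto `V ∩ {x_0 = 0}` and
`U ∩ {x_0 = α(x_1) x_1²}` onto `V ∩ {x_0 = x_1²}`. -/
theorem stmt_17 (α : ℝ → ℝ) (W : Set ℝ) (hW : IsOpen W) (h0W : (0 : ℝ) ∈ W)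
    (hα : ContDiffOn ℝ ∞ α W) (hpos : 0 < α 0) :
    ∃ U V : Set (ℝ × ℝ), IsOpen U ∧ IsOpen V ∧
      (0 : ℝ × ℝ) ∈ U ∧ (0 : ℝ × ℝ) ∈ V ∧ U ⊆ Set.univ ×ˢ W ∧
      ∃ ψ φ : ℝ × ℝ → ℝ × ℝ,
        ContDiffOn ℝ ∞ ψ U ∧ ContDiffOn ℝ ∞ φ V ∧
        (∀ z ∈ U, ψ z ∈ V) ∧ (∀ z ∈ V, φ z ∈ U) ∧
        (∀ z ∈ U, φ (ψ z) = z) ∧ (∀ z ∈ V, ψ (φ z) = z) ∧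
        ψ 0 = 0 ∧
        ψ '' (U ∩ {z : ℝ × ℝ | z.1 = 0}) = V ∩ {z : ℝ × ℝ | z.1 = 0} ∧
        ψ '' (U ∩ {z : ℝ × ℝ | z.1 = α z.2 * z.2 ^ 2}) = V ∩ {z : ℝ × ℝ | z.1 = z.2 ^ 2} := by
  set S := W ∩ α ⁻¹' Ioi 0
  have hS : IsOpen S := hα.continuousOn.isOpen_inter_preimage hW isOpen_Ioi
  have hαS : ContDiffOn ℝ ∞ α S := hα.mono inter_subset_left
  have hα0 : ∀ x ∈ S, α x ≠ 0 := fun _ hx => hx.2.ne'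
  have h0 : (0 : ℝ × ℝ) ∈ univ ×ˢ S := ⟨trivial, h0W, hpos⟩
  refine ⟨univ ×ˢ S, univ ×ˢ S, isOpen_univ.prod hS, isOpen_univ.prod hS, h0, h0,
    prod_mono subset_rfl inter_subset_left, scaleFst α⁻¹, scaleFst α, (hαS.inv hα0).scaleFst,
    hαS.scaleFst, mapsTo_scaleFst _ S, mapsTo_scaleFst _ S,
    fun z hz => scaleFst_scaleFst_inv (hα0 _ hz.2), fun z hz => scaleFst_inv_scaleFst (hα0 _ hz.2),
    by ext <;> simp, ?_, image_scaleFst_inv_graph hα0 (· ^ 2)⟩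
  simpa using image_scaleFst_inv_graph hα0 0
end
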